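/- There exists a constant C > 0 such that for all real numbers λ, μ ≥ 0 and all ξ, η ∈ Matrix (Fin 3) (Fin 3) ℝ, |F_{λ,μ}(ξ) − F_{λ,μ}(η)| ≤ C·(λ + μ + F_{λ,μ}(ξ) + F_{λ,μ}(η))^{3/4}·(λ+μ)^{1/4}·‖ξ − η‖, where F_{λ,μ}(ξ) := (λ/2)·(tr Ẽ(ξ))² + μ·‖Ẽ(ξ)‖² and Ẽ(ξ) := (1/2)(ξ + ξᵀ + ξᵀξ). -/

import Mathlib

open Matrix

/-- The Frobenius norm of a real matrix: `‖ξ‖ = (tr(ξᵀξ))^(1/2)`. -/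
noncomputable def frobNorm {M N : ℕ} (ξ : Matrix (Fin M) (Fin N) ℝ) : ℝ :=
  Real.sqrt ((ξᵀ * ξ).trace)

/-- The Green-Saint Venant strain tensor `Ẽ(ξ) = (1/2)(ξ + ξᵀ + ξᵀξ)`. -/
noncomputable def Etil (ξ : Matrix (Fin 3) (Fin 3) ℝ) : Matrix (Fin 3) (Fin 3) ℝ :=
  (1 / 2 : ℝ) • (ξ + ξᵀ + ξᵀ * ξ)

/-- The Saint Venant–Kirchhoff hyper-elastic energy density with Lamé
coefficients `l, m`: `F(ξ) = (l/2)(tr Ẽ(ξ))² + m‖Ẽ(ξ)‖²`. -/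
noncomputable def Fsvk (l m : ℝ) (ξ : Matrix (Fin 3) (Fin 3) ℝ) : ℝ :=
  l / 2 * (Etil ξ).trace ^ 2 + m * frobNorm (Etil ξ) ^ 2

/-! The energy is `F(ξ) = B(Ẽ(ξ), Ẽ(ξ))` for the positive semidefinite bilinear form
`B(X, Y) = (λ/2) tr X tr Y + μ tr(XᵀY)`. Hence `F(ξ) - F(η) = B(Ẽ(ξ) - Ẽ(η), Ẽ(ξ) + Ẽ(η))`, and
Cauchy–Schwarz for `B` together with the parallelogram law and `(tr X)² ≤ 3‖X‖²` give
`(F(ξ) - F(η))² ≤ 3(λ+μ)(F(ξ) + F(η))‖Ẽ(ξ) - Ẽ(η)‖²`. The strain is locally Lipschitz,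
`‖Ẽ(ξ) - Ẽ(η)‖ ≤ (1 + (‖ξ‖ + ‖η‖)/2)‖ξ - η‖`, and `ξ` is controlled by the energy: from
`‖1 + ξ‖² = 3 + 2 tr Ẽ(ξ)` we get `‖ξ‖² ≤ 4(3 + tr Ẽ(ξ))`, while `(λ+μ)(tr Ẽ(ξ))² ≤ 5F(ξ)`.
So `(λ+μ)(1 + (‖ξ‖ + ‖η‖)/2)⁴ ≤ 2028(λ+μ+F(ξ)+F(η))`, and the fourth power of the first estimate
is the claim with `C = 12`. -/

attribute [local instance] Matrix.frobeniusNormedAddCommGroup Matrix.frobeniusNormedSpace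

namespace Matrix

variable {m n : Type*} [Fintype m] [Fintype n]

theorem trace_transpose_mul_eq_sum (A B : Matrix m n ℝ) :
    (Aᵀ * B).trace = ∑ i, ∑ j, A i j * B i j := by
  simp only [trace, diag, mul_apply, transpose_apply]
  exact Finset.sum_comm

theorem frobenius_norm_eq_sqrt_sum (A : Matrix m n ℝ) :
    ‖A‖ = √(∑ i, ∑ j, A i j ^ 2) := by
  simp [frobenius_norm_def, Real.sqrt_eq_rpow]

theorem frobenius_norm_sq (A : Matrix m n ℝ) : ‖A‖ ^ 2 = (Aᵀ * A).trace := by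
  rw [frobenius_norm_eq_sqrt_sum, Real.sq_sqrt (by positivity), trace_transpose_mul_eq_sum]
  simp only [sq]

theorem trace_transpose_mul_comm (A B : Matrix m n ℝ) : (Aᵀ * B).trace = (Bᵀ * A).trace := by
  rw [← trace_transpose, transpose_mul, transpose_transpose]

theorem frobNorm_eq_norm {M N : ℕ} (A : Matrix (Fin M) (Fin N) ℝ) : frobNorm A = ‖A‖ := by
  rw [frobNorm, ← frobenius_norm_sq, Real.sqrt_sq (norm_nonneg A)]

theorem abs_trace_transpose_mul_le (A B : Matrix m n ℝ) :
    |(Aᵀ * B).trace| ≤ ‖A‖ * ‖B‖ := by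
  have cauchy_schwarz (A : Matrix m n ℝ) : (Aᵀ * B).trace ≤ ‖A‖ * ‖B‖ := by
    simp only [trace_transpose_mul_eq_sum, frobenius_norm_eq_sqrt_sum, ← Finset.sum_product']
    exact Real.sum_mul_le_sqrt_mul_sqrt _ _ _
  refine abs_le.mpr ⟨?_, cauchy_schwarz A⟩
  rw [neg_le]
  simpa using cauchy_schwarz (-A)

theorem sq_trace_le [DecidableEq n] (A : Matrix n n ℝ) :
    A.trace ^ 2 ≤ Fintype.card n * ‖A‖ ^ 2 := by
  have h := abs_trace_transpose_mul_le 1 A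
  rw [transpose_one, Matrix.one_mul] at h
  calc A.trace ^ 2 = |A.trace| ^ 2 := (sq_abs _).symm
    _ ≤ (‖(1 : Matrix n n ℝ)‖ * ‖A‖) ^ 2 := pow_le_pow_left₀ (abs_nonneg _) h 2
    _ = Fintype.card n * ‖A‖ ^ 2 := by
      rw [mul_pow, frobenius_norm_sq, transpose_one, Matrix.one_mul, trace_one]

end Matrix

section SvkForm

variable {n : Type*} [Fintype n]

noncomputable def svkForm (l m : ℝ) (X Y : Matrix n n ℝ) : ℝ :=
  l / 2 * X.trace * Y.trace + m * (Xᵀ * Y).trace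

variable (l m : ℝ)

theorem svkForm_self (X : Matrix n n ℝ) : svkForm l m X X = l / 2 * X.trace ^ 2 + m * ‖X‖ ^ 2 := by
  rw [svkForm, frobenius_norm_sq]
  ring

theorem svkForm_self_sub_svkForm_self (X Y : Matrix n n ℝ) :
    svkForm l m X X - svkForm l m Y Y = svkForm l m (X - Y) (X + Y) := by
  simp only [svkForm, transpose_sub, Matrix.sub_mul, Matrix.mul_add, trace_add, trace_sub,
    trace_transpose_mul_comm Y X]
  ring

theorem svkForm_add_self_add_svkForm_sub_self (X Y : Matrix n n ℝ) :
    svkForm l m (X + Y) (X + Y) + svkForm l m (X - Y) (X - Y)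
      = 2 * (svkForm l m X X + svkForm l m Y Y) := by
  simp only [svkForm, transpose_add, transpose_sub, Matrix.add_mul, Matrix.sub_mul, Matrix.mul_add,
    Matrix.mul_sub, trace_add, trace_sub, trace_transpose_mul_comm Y X]
  ring

variable {l m}

theorem svkForm_self_nonneg (hl : 0 ≤ l) (hm : 0 ≤ m) (X : Matrix n n ℝ) :
    0 ≤ svkForm l m X X := by
  rw [svkForm_self]
  positivity

theorem sq_svkForm_le (hl : 0 ≤ l) (hm : 0 ≤ m) (X Y : Matrix n n ℝ) :
    svkForm l m X Y ^ 2 ≤ svkForm l m X X * svkForm l m Y Y := by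
  rw [svkForm_self, svkForm_self, svkForm]
  have hr := abs_trace_transpose_mul_le X Y
  set p := X.trace
  set q := Y.trace
  set r := (Xᵀ * Y).trace
  have hpqr : p * q * r ≤ |p| * |q| * (‖X‖ * ‖Y‖) := by
    rw [← abs_mul]
    exact (le_abs_self _).trans (by rw [abs_mul]; gcongr)
  have hr2 : r ^ 2 ≤ (‖X‖ * ‖Y‖) ^ 2 := sq_le_sq' (abs_le.mp hr).1 (abs_le.mp hr).2
  have hamgm := sq_nonneg (|p| * ‖Y‖ - |q| * ‖X‖)
  rw [sub_sq, mul_pow, mul_pow, sq_abs, sq_abs] at hamgm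
  linarith [mul_nonneg (mul_nonneg hl hm) hamgm, mul_le_mul_of_nonneg_left hpqr (mul_nonneg hl hm),
    mul_le_mul_of_nonneg_left hr2 (mul_nonneg hm hm)]

theorem sq_svkForm_self_sub_svkForm_self_le (hl : 0 ≤ l) (hm : 0 ≤ m) (X Y : Matrix n n ℝ) :
    (svkForm l m X X - svkForm l m Y Y) ^ 2
      ≤ svkForm l m (X - Y) (X - Y) * (2 * (svkForm l m X X + svkForm l m Y Y)) := by
  rw [svkForm_self_sub_svkForm_self, ← svkForm_add_self_add_svkForm_sub_self]
  exact (sq_svkForm_le hl hm _ _).trans <| mul_le_mul_of_nonneg_left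
    (le_add_of_nonneg_right (svkForm_self_nonneg hl hm _)) (svkForm_self_nonneg hl hm _)

theorem svkForm_self_le [DecidableEq n] (hl : 0 ≤ l) (X : Matrix n n ℝ) :
    svkForm l m X X ≤ (Fintype.card n / 2 * l + m) * ‖X‖ ^ 2 := by
  rw [svkForm_self]
  nlinarith [mul_le_mul_of_nonneg_left (sq_trace_le X) hl]

end SvkForm

section SaintVenantKirchhoff

variable {l m : ℝ}

theorem Fsvk_eq_svkForm (l m : ℝ) (ξ : Matrix (Fin 3) (Fin 3) ℝ) :
    Fsvk l m ξ = svkForm l m (Etil ξ) (Etil ξ) := by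
  rw [Fsvk, svkForm_self, frobNorm_eq_norm]

theorem Fsvk_nonneg (hl : 0 ≤ l) (hm : 0 ≤ m) (ξ : Matrix (Fin 3) (Fin 3) ℝ) :
    0 ≤ Fsvk l m ξ := by
  rw [Fsvk_eq_svkForm]
  exact svkForm_self_nonneg hl hm _

theorem Etil_sub_Etil (ξ η : Matrix (Fin 3) (Fin 3) ℝ) :
    Etil ξ - Etil η = (1 / 2 : ℝ) • (ξ - η + (ξ - η)ᵀ + ξᵀ * (ξ - η) + (ξ - η)ᵀ * η) := by
  rw [Etil, Etil, ← smul_sub, transpose_sub]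
  congr 1
  noncomm_ring

theorem norm_Etil_sub_Etil_le (ξ η : Matrix (Fin 3) (Fin 3) ℝ) :
    ‖Etil ξ - Etil η‖ ≤ (1 + (‖ξ‖ + ‖η‖) / 2) * ‖ξ - η‖ := by
  rw [Etil_sub_Etil, norm_smul, Real.norm_of_nonneg (by norm_num)]
  have h₁ : ‖ξᵀ * (ξ - η)‖ ≤ ‖ξ‖ * ‖ξ - η‖ := by
    simpa only [frobenius_norm_transpose] using frobenius_norm_mul ξᵀ (ξ - η)
  have h₂ : ‖(ξ - η)ᵀ * η‖ ≤ ‖ξ - η‖ * ‖η‖ := by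
    simpa only [frobenius_norm_transpose] using frobenius_norm_mul (ξ - η)ᵀ η
  have h₀ : ‖ξ - η + (ξ - η)ᵀ + ξᵀ * (ξ - η) + (ξ - η)ᵀ * η‖
      ≤ ‖ξ - η‖ + ‖(ξ - η)ᵀ‖ + ‖ξᵀ * (ξ - η)‖ + ‖(ξ - η)ᵀ * η‖ := norm_add₄_le
  rw [frobenius_norm_transpose] at h₀
  linarith

theorem norm_one_add_sq (ξ : Matrix (Fin 3) (Fin 3) ℝ) :
    ‖1 + ξ‖ ^ 2 = 3 + 2 * (Etil ξ).trace := by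
  rw [frobenius_norm_sq, transpose_add, transpose_one, Etil]
  simp only [Matrix.add_mul, Matrix.mul_add, Matrix.one_mul, Matrix.mul_one, trace_add, trace_smul,
    trace_one, trace_transpose, Fintype.card_fin, smul_eq_mul]
  ring

theorem norm_sq_le_of_trace_Etil (ξ : Matrix (Fin 3) (Fin 3) ℝ) :
    ‖ξ‖ ^ 2 ≤ 4 * (3 + (Etil ξ).trace) := by
  have htri : ‖ξ‖ ≤ ‖1 + ξ‖ + ‖(1 : Matrix (Fin 3) (Fin 3) ℝ)‖ := by
    simpa using norm_sub_le (1 + ξ) 1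
  have hone : ‖(1 : Matrix (Fin 3) (Fin 3) ℝ)‖ ^ 2 = 3 := by
    rw [frobenius_norm_sq]
    simp
  calc ‖ξ‖ ^ 2 ≤ (‖1 + ξ‖ + ‖(1 : Matrix (Fin 3) (Fin 3) ℝ)‖) ^ 2 :=
        pow_le_pow_left₀ (norm_nonneg ξ) htri 2
    _ ≤ 2 * (‖1 + ξ‖ ^ 2 + ‖(1 : Matrix (Fin 3) (Fin 3) ℝ)‖ ^ 2) := add_sq_le
    _ = 4 * (3 + (Etil ξ).trace) := by rw [norm_one_add_sq, hone]; ring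

theorem add_mul_sq_trace_Etil_le (hl : 0 ≤ l) (hm : 0 ≤ m) (ξ : Matrix (Fin 3) (Fin 3) ℝ) :
    (l + m) * (Etil ξ).trace ^ 2 ≤ 5 * Fsvk l m ξ := by
  have h := sq_trace_le (Etil ξ)
  rw [Fintype.card_fin, Nat.cast_ofNat] at h
  rw [Fsvk, frobNorm_eq_norm]
  nlinarith [mul_le_mul_of_nonneg_left h hm, mul_nonneg hl (sq_nonneg (Etil ξ).trace)]

theorem sq_Fsvk_sub_Fsvk_le (hl : 0 ≤ l) (hm : 0 ≤ m) (ξ η : Matrix (Fin 3) (Fin 3) ℝ) :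
    (Fsvk l m ξ - Fsvk l m η) ^ 2
      ≤ 3 * (l + m) * (Fsvk l m ξ + Fsvk l m η) * ((1 + (‖ξ‖ + ‖η‖) / 2) * ‖ξ - η‖) ^ 2 := by
  have hstrain : svkForm l m (Etil ξ - Etil η) (Etil ξ - Etil η)
      ≤ 3 / 2 * (l + m) * ((1 + (‖ξ‖ + ‖η‖) / 2) * ‖ξ - η‖) ^ 2 :=
    calc _ ≤ (3 / 2 * l + m) * ‖Etil ξ - Etil η‖ ^ 2 := by
          simpa using svkForm_self_le (m := m) hl (Etil ξ - Etil η)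
      _ ≤ 3 / 2 * (l + m) * ((1 + (‖ξ‖ + ‖η‖) / 2) * ‖ξ - η‖) ^ 2 := by
          gcongr
          · linarith
          · exact norm_Etil_sub_Etil_le ξ η
  rw [Fsvk_eq_svkForm, Fsvk_eq_svkForm]
  calc _ ≤ svkForm l m (Etil ξ - Etil η) (Etil ξ - Etil η)
          * (2 * (svkForm l m (Etil ξ) (Etil ξ) + svkForm l m (Etil η) (Etil η))) :=
        sq_svkForm_self_sub_svkForm_self_le hl hm _ _
    _ ≤ 3 / 2 * (l + m) * ((1 + (‖ξ‖ + ‖η‖) / 2) * ‖ξ - η‖) ^ 2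
          * (2 * (svkForm l m (Etil ξ) (Etil ξ) + svkForm l m (Etil η) (Etil η))) := by
        have := svkForm_self_nonneg hl hm (Etil ξ)
        have := svkForm_self_nonneg hl hm (Etil η)
        gcongr
    _ = _ := by ring

theorem add_mul_pow_four_le (hl : 0 ≤ l) (hm : 0 ≤ m) (ξ η : Matrix (Fin 3) (Fin 3) ℝ) :
    (l + m) * (1 + (‖ξ‖ + ‖η‖) / 2) ^ 4 ≤ 2028 * (l + m + Fsvk l m ξ + Fsvk l m η) := by
  set t₁ := (Etil ξ).trace
  set t₂ := (Etil η).trace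
  have hw : (1 + (‖ξ‖ + ‖η‖) / 2) ^ 2 ≤ 26 + 4 * |t₁| + 4 * |t₂| := by
    nlinarith [norm_sq_le_of_trace_Etil ξ, norm_sq_le_of_trace_Etil η, le_abs_self t₁,
      le_abs_self t₂, sq_nonneg (1 - (‖ξ‖ + ‖η‖) / 2), sq_nonneg (‖ξ‖ - ‖η‖)]
  have hw4 : (1 + (‖ξ‖ + ‖η‖) / 2) ^ 4 ≤ 2028 + 48 * t₁ ^ 2 + 48 * t₂ ^ 2 := by
    have h0 : 0 ≤ (1 + (‖ξ‖ + ‖η‖) / 2) ^ 2 := sq_nonneg _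
    nlinarith [pow_le_pow_left₀ h0 hw 2, sq_abs t₁, sq_abs t₂, sq_nonneg (|t₁| - |t₂|),
      sq_nonneg (|t₁| - 13 / 2), sq_nonneg (|t₂| - 13 / 2)]
  nlinarith [mul_le_mul_of_nonneg_left hw4 (add_nonneg hl hm), add_mul_sq_trace_Etil_le hl hm ξ,
    add_mul_sq_trace_Etil_le hl hm η, Fsvk_nonneg hl hm ξ, Fsvk_nonneg hl hm η]

end SaintVenantKirchhoff

theorem abs_le_of_pow_four_le {x c G a d : ℝ} (hc : 0 ≤ c) (hG : 0 ≤ G) (ha : 0 ≤ a) (hd : 0 ≤ d)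
    (h : x ^ 4 ≤ c ^ 4 * G ^ 3 * a * d ^ 4) :
    |x| ≤ c * G ^ ((3 : ℝ) / 4) * a ^ ((1 : ℝ) / 4) * d := by
  have hG34 : (G ^ ((3 : ℝ) / 4)) ^ 4 = G ^ 3 := by
    rw [← Real.rpow_mul_natCast hG]
    norm_num
  have ha14 : (a ^ ((1 : ℝ) / 4)) ^ 4 = a := by
    rw [← Real.rpow_mul_natCast ha]
    norm_num
  refine (pow_le_pow_iff_left₀ (abs_nonneg x) (by positivity) four_ne_zero).mp ?_
  rw [pow_abs, abs_of_nonneg (by positivity), mul_pow, mul_pow, mul_pow]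
  rwa [hG34, ha14]

/-- The verification, in Example 2, that the Saint Venant–Kirchhoff density
satisfies the Lipschitz condition (2.5) with `p = 4` and `h_n = a_n = λ_n + μ_n`. -/
theorem svk_lipschitz_condition :
    ∃ C : ℝ, 0 < C ∧ ∀ l m : ℝ, 0 ≤ l → 0 ≤ m →
      ∀ ξ η : Matrix (Fin 3) (Fin 3) ℝ,
        |Fsvk l m ξ - Fsvk l m η| ≤
          C * (l + m + Fsvk l m ξ + Fsvk l m η) ^ ((3 : ℝ) / 4) *
            (l + m) ^ ((1 : ℝ) / 4) * frobNorm (ξ - η) := by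
  refine ⟨12, by norm_num, fun l m hl hm ξ η => ?_⟩
  have hFξ := Fsvk_nonneg hl hm ξ
  have hFη := Fsvk_nonneg hl hm η
  set G := l + m + Fsvk l m ξ + Fsvk l m η
  set w := 1 + (‖ξ‖ + ‖η‖) / 2
  rw [frobNorm_eq_norm]
  refine abs_le_of_pow_four_le (by norm_num) (by positivity) (by positivity) (norm_nonneg _) ?_
  have hsq : (Fsvk l m ξ - Fsvk l m η) ^ 2 ≤ 3 * (l + m) * G * (w * ‖ξ - η‖) ^ 2 :=
    (sq_Fsvk_sub_Fsvk_le hl hm ξ η).trans (by gcongr; linarith)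
  calc (Fsvk l m ξ - Fsvk l m η) ^ 4 = ((Fsvk l m ξ - Fsvk l m η) ^ 2) ^ 2 := by ring
    _ ≤ (3 * (l + m) * G * (w * ‖ξ - η‖) ^ 2) ^ 2 := by gcongr
    _ = 9 * G ^ 2 * ((l + m) * w ^ 4) * (l + m) * ‖ξ - η‖ ^ 4 := by ring
    _ ≤ 9 * G ^ 2 * (2028 * G) * (l + m) * ‖ξ - η‖ ^ 4 := by
        gcongr 9 * G ^ 2 * ?_ * (l + m) * ‖ξ - η‖ ^ 4
        exact add_mul_pow_four_le hl hm ξ η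
    _ ≤ 12 ^ 4 * G ^ 3 * (l + m) * ‖ξ - η‖ ^ 4 := by
        have : 0 ≤ G ^ 3 * (l + m) * ‖ξ - η‖ ^ 4 := by positivity
        linarith
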